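/- For a₁, a₂, a₃ > 0, set p(x) = (1+a₁x²)(1+a₂x²)(1+a₃x²) − 1, P(x) = p(x)/x², and φ_k = a_k ∫_{−∞}^{∞} dx / ((1+a_k x²)√P(x)) for k = 1,2,3. Then each φ_k lies in (0,π) and φ₁ + φ₂ + φ₃ = π. -/

import Mathlib

/-!
For `x > 0` we have `√P = √p / x`, so after folding the even integrands onto `(0, ∞)` the `k`-th
one is `2 aₖ x / ((1 + aₖ x²) √p)`. The `2 aₖ x / (1 + aₖ x²)` are the logarithmic derivatives of
the factors of `1 + p`, so the integrands sum to `p' / ((1 + p) √p) = (2 arctan √p)'`. As `p`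
increases from `0` to `∞`, the angles add up to `2 · π/2 = π`; each is positive, hence below `π`.
-/

open MeasureTheory Set Filter Real Finset Topology

theorem integrableOn_and_integral_Ioi_deriv_div_one_add_mul_sqrt {q q' : ℝ → ℝ}
    (hq0 : q 0 = 0) (hcont : ContinuousWithinAt q (Ici 0) 0)
    (hderiv : ∀ x ∈ Ioi (0 : ℝ), HasDerivAt q (q' x) x)
    (hpos : ∀ x ∈ Ioi (0 : ℝ), 0 < q x) (hq' : ∀ x ∈ Ioi (0 : ℝ), 0 ≤ q' x)
    (htop : Tendsto q atTop atTop) :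
    IntegrableOn (fun x => q' x / ((1 + q x) * √(q x))) (Ioi 0) ∧
      ∫ x in Ioi 0, q' x / ((1 + q x) * √(q x)) = π := by
  set F : ℝ → ℝ := fun x => 2 * arctan √(q x)
  have hF0 : F 0 = 0 := by simp [F, hq0]
  have hFcont : ContinuousWithinAt F (Ici 0) 0 :=
    ((continuous_arctan.comp continuous_sqrt).continuousAt.comp_continuousWithinAt
      hcont).const_mul 2
  have hFderiv : ∀ x ∈ Ioi (0 : ℝ), HasDerivAt F (q' x / ((1 + q x) * √(q x))) x := by
    intro x hx
    refine (((hderiv x hx).sqrt (hpos x hx).ne').arctan.const_mul 2).congr_deriv ?_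
    have := sqrt_pos.2 (hpos x hx)
    rw [sq_sqrt (hpos x hx).le]
    field_simp
  have hnonneg : ∀ x ∈ Ioi (0 : ℝ), 0 ≤ q' x / ((1 + q x) * √(q x)) := fun x hx => by
    have := hpos x hx
    have := hq' x hx
    positivity
  have hFtop : Tendsto F atTop (𝓝 π) := by
    have := (tendsto_arctan_atTop.mono_right nhdsWithin_le_nhds).comp
      (tendsto_sqrt_atTop.comp htop)
    simpa [F, mul_div_cancel₀] using this.const_mul 2
  refine ⟨integrableOn_Ioi_deriv_of_nonneg hFcont hFderiv hnonneg hFtop, ?_⟩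
  rw [integral_Ioi_of_hasDerivAt_of_nonneg hFcont hFderiv hnonneg hFtop, hF0, sub_zero]

section Lawlor

variable {ι : Type*} [Fintype ι] (a : ι → ℝ)

noncomputable def lawlorPoly (x : ℝ) : ℝ := ∏ i, (1 + a i * x ^ 2) - 1

noncomputable def lawlorAngle (i : ι) : ℝ :=
  a i * ∫ x, 1 / ((1 + a i * x ^ 2) * √(lawlorPoly a x / x ^ 2))

noncomputable def lawlorKernel (i : ι) (x : ℝ) : ℝ :=
  2 * a i * x / ((1 + a i * x ^ 2) * √(lawlorPoly a x))

variable {a}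

lemma lawlorPoly_zero : lawlorPoly a 0 = 0 := by simp [lawlorPoly]

lemma lawlorPoly_neg (x : ℝ) : lawlorPoly a (-x) = lawlorPoly a x := by simp [lawlorPoly]

lemma continuous_lawlorPoly : Continuous (lawlorPoly a) := by unfold lawlorPoly; fun_prop

lemma mul_sq_le_lawlorPoly (ha : ∀ i, 0 ≤ a i) (i : ι) (x : ℝ) :
    a i * x ^ 2 ≤ lawlorPoly a x := by
  classical
  have hrest : 1 ≤ ∏ j ∈ univ.erase i, (1 + a j * x ^ 2) :=
    one_le_prod fun j _ => le_add_of_nonneg_right (mul_nonneg (ha j) (sq_nonneg x))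
  rw [lawlorPoly, ← mul_prod_erase univ _ (mem_univ i)]
  nlinarith [mul_nonneg (ha i) (sq_nonneg x)]

lemma lawlorPoly_pos [Nonempty ι] (ha : ∀ i, 0 < a i) {x : ℝ} (hx : 0 < x) :
    0 < lawlorPoly a x :=
  (mul_pos (ha (Classical.arbitrary ι)) (pow_pos hx 2)).trans_le
    (mul_sq_le_lawlorPoly (fun i => (ha i).le) _ x)

lemma tendsto_lawlorPoly_atTop [Nonempty ι] (ha : ∀ i, 0 < a i) :
    Tendsto (lawlorPoly a) atTop atTop :=
  tendsto_atTop_mono (mul_sq_le_lawlorPoly (fun i => (ha i).le) (Classical.arbitrary ι))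
    ((tendsto_pow_atTop two_ne_zero).const_mul_atTop (ha _))

lemma hasDerivAt_lawlorPoly (ha : ∀ i, 0 ≤ a i) (x : ℝ) :
    HasDerivAt (lawlorPoly a)
      ((1 + lawlorPoly a x) * ∑ i, 2 * a i * x / (1 + a i * x ^ 2)) x := by
  classical
  have hprod := HasDerivAt.fun_finsetProd (u := univ) (f := fun i y => 1 + a i * y ^ 2)
    (f' := fun i => 2 * a i * x) fun i _ => by
      simpa [mul_comm, mul_left_comm] using ((hasDerivAt_pow 2 x).const_mul (a i)).const_add 1
  refine (hprod.sub_const 1).congr_deriv ?_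
  rw [lawlorPoly, add_sub_cancel, mul_sum]
  refine sum_congr rfl fun i _ => ?_
  have : 0 < 1 + a i * x ^ 2 := by have := ha i; positivity
  rw [← mul_prod_erase univ _ (mem_univ i), smul_eq_mul, mul_comm (1 + _), mul_assoc _ (1 + _),
    mul_div_cancel₀ _ this.ne']

lemma sum_lawlorKernel (ha : ∀ i, 0 ≤ a i) (x : ℝ) :
    ∑ i, lawlorKernel a i x = ((1 + lawlorPoly a x) * ∑ i, 2 * a i * x / (1 + a i * x ^ 2)) /
      ((1 + lawlorPoly a x) * √(lawlorPoly a x)) := by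
  have hprod : 0 < 1 + lawlorPoly a x := by
    rw [lawlorPoly, add_sub_cancel]
    exact prod_pos fun i _ => by have := ha i; positivity
  rw [mul_div_mul_left _ _ hprod.ne', sum_div]
  simp only [lawlorKernel, div_div]

lemma lawlorKernel_nonneg (ha : ∀ i, 0 ≤ a i) (i : ι) {x : ℝ} (hx : 0 ≤ x) :
    0 ≤ lawlorKernel a i x := by
  have := ha i
  unfold lawlorKernel
  positivity

lemma lawlorKernel_pos [Nonempty ι] (ha : ∀ i, 0 < a i) (i : ι) {x : ℝ} (hx : 0 < x) :
    0 < lawlorKernel a i x := by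
  have := ha i
  have := sqrt_pos.2 (lawlorPoly_pos ha hx)
  unfold lawlorKernel
  positivity

lemma integrableOn_sum_lawlorKernel_and_integral_eq_pi [Nonempty ι] (ha : ∀ i, 0 < a i) :
    IntegrableOn (fun x => ∑ i, lawlorKernel a i x) (Ioi 0) ∧
      ∫ x in Ioi 0, ∑ i, lawlorKernel a i x = π := by
  have ha' : ∀ i, 0 ≤ a i := fun i => (ha i).le
  simp_rw [sum_lawlorKernel ha']
  refine integrableOn_and_integral_Ioi_deriv_div_one_add_mul_sqrt lawlorPoly_zero
    continuous_lawlorPoly.continuousWithinAt (fun x _ => hasDerivAt_lawlorPoly ha' x)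
    (fun x hx => lawlorPoly_pos ha hx) (fun x (hx : 0 < x) => ?_) (tendsto_lawlorPoly_atTop ha)
  have := lawlorPoly_pos ha hx
  refine mul_nonneg (by positivity) (sum_nonneg fun i _ => ?_)
  have := ha i
  positivity

lemma integrableOn_lawlorKernel [Nonempty ι] (ha : ∀ i, 0 < a i) (i : ι) :
    IntegrableOn (lawlorKernel a i) (Ioi 0) := by
  refine (integrableOn_sum_lawlorKernel_and_integral_eq_pi ha).1.mono' ?_ ?_
  · exact (by unfold lawlorKernel lawlorPoly; fun_prop : Measurable (lawlorKernel a i))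
      |>.aestronglyMeasurable
  · filter_upwards [ae_restrict_mem measurableSet_Ioi] with x hx
    rw [norm_of_nonneg (lawlorKernel_nonneg (fun j => (ha j).le) i (le_of_lt hx))]
    exact single_le_sum (fun j _ => lawlorKernel_nonneg (fun j => (ha j).le) j (le_of_lt hx))
      (mem_univ i)

lemma lawlorAngle_eq_integral_lawlorKernel (i : ι) :
    lawlorAngle a i = ∫ x in Ioi 0, lawlorKernel a i x := by
  let g : ℝ → ℝ := fun x => 1 / ((1 + a i * x ^ 2) * √(lawlorPoly a x / x ^ 2))
  have heven : ∫ x, g x = 2 * ∫ x in Ioi 0, g x := by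
    rw [← integral_comp_abs]
    congr 1 with x
    rcases abs_choice x with h | h <;> simp [g, h, lawlorPoly_neg]
  rw [lawlorAngle, heven, ← mul_assoc, ← integral_const_mul]
  refine setIntegral_congr_fun measurableSet_Ioi fun x (hx : 0 < x) => ?_
  simp only [g, lawlorKernel, sqrt_div' _ (sq_nonneg x), sqrt_sq hx.le, mul_div_assoc',
    div_div_eq_mul_div]
  ring

lemma lawlorAngle_pos [Nonempty ι] (ha : ∀ i, 0 < a i) (i : ι) : 0 < lawlorAngle a i := by
  have hsupp : Function.support (lawlorKernel a i) ∩ Set.Ioi 0 = Set.Ioi 0 :=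
    inter_eq_right.2 fun x hx => (lawlorKernel_pos ha i hx).ne'
  rw [lawlorAngle_eq_integral_lawlorKernel,
    setIntegral_pos_iff_support_of_nonneg_ae _ (integrableOn_lawlorKernel ha i), hsupp]
  · simp
  · filter_upwards [ae_restrict_mem measurableSet_Ioi] with x hx
    exact lawlorKernel_nonneg (fun j => (ha j).le) i (le_of_lt hx)

theorem sum_lawlorAngle [Nonempty ι] (ha : ∀ i, 0 < a i) : ∑ i, lawlorAngle a i = π := by
  simp_rw [lawlorAngle_eq_integral_lawlorKernel]
  rw [← integral_finsetSum univ fun i _ => integrableOn_lawlorKernel ha i]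
  exact (integrableOn_sum_lawlorKernel_and_integral_eq_pi ha).2

theorem lawlorAngle_lt_pi [Nontrivial ι] (ha : ∀ i, 0 < a i) (i : ι) :
    lawlorAngle a i < π := by
  obtain ⟨j, hji⟩ := exists_ne i
  rw [← sum_lawlorAngle ha]
  exact single_lt_sum hji (mem_univ i) (mem_univ j) (lawlorAngle_pos ha j)
    fun k _ _ => (lawlorAngle_pos ha k).le

end Lawlor

theorem lawlor_angles (a : Fin 3 → ℝ) (ha : ∀ k, 0 < a k) :
    let p : ℝ → ℝ := fun x => (1 + a 0 * x ^ 2) * (1 + a 1 * x ^ 2) * (1 + a 2 * x ^ 2) - 1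
    let P : ℝ → ℝ := fun x => p x / x ^ 2
    let φ : Fin 3 → ℝ := fun k =>
      a k * ∫ x : ℝ, 1 / ((1 + a k * x ^ 2) * Real.sqrt (P x))
    (∀ k, φ k ∈ Set.Ioo 0 Real.pi) ∧ φ 0 + φ 1 + φ 2 = Real.pi := by
  intro p P φ
  have hp : p = lawlorPoly a := funext fun x => by simp [p, lawlorPoly, Fin.prod_univ_three]
  have hφ : φ = lawlorAngle a := by
    funext k
    simp only [φ, P, hp, lawlorAngle]
  rw [hφ]
  refine ⟨fun k => ⟨lawlorAngle_pos ha k, lawlorAngle_lt_pi ha k⟩, ?_⟩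
  simpa [Fin.sum_univ_three] using sum_lawlorAngle ha
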